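/- arXiv:0908.3091 — 2 statements merged into one kernel-verified Lean document; each statement's English description precedes it below -/
import Mathlib

section
/- The group generated by the six face rotations of the 2×2×2 Pocket Cube, as permutations of the 24 facets given by U=(1,2,3,4)(5,17,13,9)(6,18,14,10), L=(1,9,21,19)(4,12,24,18)(5,6,7,8), F=(9,10,11,12)(4,13,22,7)(3,16,21,6), R=(13,14,15,16)(2,20,22,10)(3,17,23,11), B=(17,18,19,20)(1,8,23,14)(2,5,24,15), D=(21,22,23,24)(12,16,20,8)(11,15,19,7), has order 88179840. -/
open Equiv

set_option maxRecDepth 100000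

private def U : Perm (Fin 25) := c[(1 : Fin 25), 2, 3, 4] * c[(5 : Fin 25), 17, 13, 9] * c[(6 : Fin 25), 18, 14, 10]
private def L : Perm (Fin 25) := c[(1 : Fin 25), 9, 21, 19] * c[(4 : Fin 25), 12, 24, 18] * c[(5 : Fin 25), 6, 7, 8]
private def F : Perm (Fin 25) := c[(9 : Fin 25), 10, 11, 12] * c[(4 : Fin 25), 13, 22, 7] * c[(3 : Fin 25), 16, 21, 6]
private def R : Perm (Fin 25) := c[(13 : Fin 25), 14, 15, 16] * c[(2 : Fin 25), 20, 22, 10] * c[(3 : Fin 25), 17, 23, 11]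
private def B : Perm (Fin 25) := c[(17 : Fin 25), 18, 19, 20] * c[(1 : Fin 25), 8, 23, 14] * c[(2 : Fin 25), 5, 24, 15]
private def D : Perm (Fin 25) := c[(21 : Fin 25), 22, 23, 24] * c[(12 : Fin 25), 16, 20, 8] * c[(11 : Fin 25), 15, 19, 7]

private def gset : Set (Perm (Fin 25)) := {U, L, F, R, B, D}
private def Gg : Subgroup (Perm (Fin 25)) := Subgroup.closure gset

/-- the simultaneous rotation of all eight corners -/
private def ρc : Perm (Fin 25) := c[(1:Fin 25),5,18] * c[(2:Fin 25),17,14] * c[(3:Fin 25),13,10] * c[(4:Fin 25),9,6] * c[(7:Fin 25),12,21] * c[(8:Fin 25),24,19] * c[(11:Fin 25),16,22] * c[(15:Fin 25),20,23]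

/-- reference sticker of each corner -/
private def bp : Fin 8 → Fin 25 := ![1,2,3,4,7,8,11,15]
/-- corner index of each sticker -/
private def cI : Fin 25 → Fin 8 := ![0,0,1,2,3,0,3,4,5,3,2,6,4,2,1,7,6,1,0,5,7,4,6,7,5]
/-- orientation offset of each sticker -/
private def ofs : Fin 25 → ZMod 3 := ![0,0,0,0,0,1,2,0,0,1,2,0,1,1,2,0,1,1,2,2,1,2,2,2,1]

private def rp (k : ZMod 3) : Perm (Fin 25) := ρc ^ k.val

private lemma rp_add : ∀ (a bb : ZMod 3), rp (a + bb) = rp a * rp bb := by decide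

private lemma L_nf : ∀ x : Fin 25, x ≠ 0 → rp (ofs x) (bp (cI x)) = x := by decide

private lemma L_rp : ∀ (k : ZMod 3) (x : Fin 25), x ≠ 0 →
    cI (rp k x) = cI x ∧ ofs (rp k x) = ofs x + k ∧ rp k x ≠ 0 := by decide

private lemma L_b : ∀ j : Fin 8, cI (bp j) = j ∧ ofs (bp j) = 0 ∧ bp j ≠ 0 := by decide

private def kk (g : Perm (Fin 25)) (j : Fin 8) : ZMod 3 := ofs (g (bp j))
private def sg (g : Perm (Fin 25)) (j : Fin 8) : Fin 8 := cI (g (bp j))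
private def tw (g : Perm (Fin 25)) : ZMod 3 := ∑ j, kk g j

private def CInv (g : Perm (Fin 25)) : Prop := g 0 = 0 ∧ Commute g ρc ∧ tw g = 0

section basic
variable {g : Perm (Fin 25)}

private lemma nz (h0 : g 0 = 0) : ∀ x : Fin 25, x ≠ 0 → g x ≠ 0 := by
  intro x hx he
  exact hx (g.injective (he.trans h0.symm))

private lemma comm_rp (hc : Commute g ρc) (k : ZMod 3) (x : Fin 25) : g (rp k x) = rp k (g x) := by
  have : Commute g (rp k) := hc.pow_right _
  have := congrFun (congrArg (fun p : Perm (Fin 25) => (p : Fin 25 → Fin 25)) this) x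
  simpa [Perm.mul_apply] using this

/-- key normal form lemma -/
private lemma main_lemma (h0 : g 0 = 0) (hc : Commute g ρc) : ∀ x : Fin 25, x ≠ 0 →
    cI (g x) = sg g (cI x) ∧ ofs (g x) = ofs x + kk g (cI x) := by
  intro x hx
  have hb := L_b (cI x)
  have hgb : g (bp (cI x)) ≠ 0 := nz h0 _ hb.2.2
  have hxe : rp (ofs x) (bp (cI x)) = x := L_nf x hx
  have hgx : g x = rp (ofs x) (g (bp (cI x))) := by
    have h2 := comm_rp hc (ofs x) (bp (cI x))
    rw [hxe] at h2; exact h2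
  rw [hgx]
  obtain ⟨h1, h2, _⟩ := L_rp (ofs x) (g (bp (cI x))) hgb
  refine ⟨h1, ?_⟩
  rw [h2, kk, add_comm]

private lemma sg_inj (h0 : g 0 = 0) (hc : Commute g ρc) : Function.Injective (sg g) := by
  intro j j' he
  have hbj := L_b j; have hbj' := L_b j'
  have hgj : g (bp j) ≠ 0 := nz h0 _ hbj.2.2
  have hgj' : g (bp j') ≠ 0 := nz h0 _ hbj'.2.2
  have e1 : rp (ofs (g (bp j))) (bp (cI (g (bp j)))) = g (bp j) := L_nf _ hgj
  have e2 : rp (ofs (g (bp j'))) (bp (cI (g (bp j')))) = g (bp j') := L_nf _ hgj'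
  have he' : cI (g (bp j)) = cI (g (bp j')) := he
  set d : ZMod 3 := ofs (g (bp j')) - ofs (g (bp j)) with hd
  have : g (bp j') = rp d (g (bp j)) := by
    rw [← e1, ← e2, he', ← Perm.mul_apply, ← rp_add, hd]
    ring_nf
  rw [← comm_rp hc] at this
  have hbe : bp j' = rp d (bp j) := g.injective this
  have : cI (bp j') = cI (bp j) := by
    rw [hbe, (L_rp d (bp j) hbj.2.2).1]
  rw [hbj.1, hbj'.1] at this
  exact this.symm

end basic

private lemma tw_one : tw 1 = 0 := by decide

private lemma tw_mul {g h : Perm (Fin 25)} (hg0 : g 0 = 0) (hgc : Commute g ρc)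
    (hh0 : h 0 = 0) (hhc : Commute h ρc) : tw (g * h) = tw g + tw h := by
  have hkey : ∀ j : Fin 8, kk (g * h) j = kk h j + kk g (sg h j) := by
    intro j
    have hb := L_b j
    have hnz : h (bp j) ≠ 0 := nz hh0 _ hb.2.2
    have := (main_lemma hg0 hgc (h (bp j)) hnz).2
    simp only [kk, sg, Perm.mul_apply]
    rw [this]; rfl
  have hbij : Function.Bijective (sg h) :=
    (Finite.injective_iff_bijective).mp (sg_inj hh0 hhc)
  calc tw (g * h) = ∑ j, (kk h j + kk g (sg h j)) := Finset.sum_congr rfl (fun j _ => hkey j)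
    _ = tw h + ∑ j, kk g (sg h j) := by rw [Finset.sum_add_distrib]; rfl
    _ = tw h + tw g := by rw [hbij.sum_comp (kk g)]; rfl
    _ = tw g + tw h := add_comm _ _

private lemma inv_gens : ∀ g ∈ gset, CInv g := by
  intro g hg
  simp only [gset, Set.mem_insert_iff, Set.mem_singleton_iff] at hg
  rcases hg with rfl|rfl|rfl|rfl|rfl|rfl <;>
    exact ⟨by decide, show _ * _ = _ * _ by decide, by decide⟩

private lemma cinv_closure : ∀ g ∈ Gg, CInv g := by
  intro g hg
  refine Subgroup.closure_induction (p := fun g _ => CInv g)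
    (fun x hx => inv_gens x hx) ⟨rfl, Commute.one_left _, tw_one⟩ ?_ ?_ hg
  · rintro x y _ _ ⟨hx0, hxc, hxt⟩ ⟨hy0, hyc, hyt⟩
    refine ⟨by simp [Perm.mul_apply, hx0, hy0], hxc.mul_left hyc, ?_⟩
    rw [tw_mul hx0 hxc hy0 hyc, hxt, hyt, add_zero]
  · rintro x _ ⟨hx0, hxc, hxt⟩
    have h0 : x⁻¹ 0 = 0 := by
      conv_lhs => rw [← hx0]
      exact Equiv.symm_apply_apply x 0
    have hc : Commute x⁻¹ ρc := hxc.inv_left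
    refine ⟨h0, hc, ?_⟩
    have := tw_mul hx0 hxc h0 hc
    rw [mul_inv_cancel, tw_one, hxt, zero_add] at this
    exact this.symm

private def Hs (i : ℕ) : Subgroup (Perm (Fin 25)) where
  carrier := {g | g ∈ Gg ∧ ∀ j : Fin 8, (j : ℕ) < i → g (bp j) = bp j}
  one_mem' := ⟨one_mem _, fun _ _ => rfl⟩
  mul_mem' := by
    rintro a b ⟨ha, ha2⟩ ⟨hb, hb2⟩
    exact ⟨mul_mem ha hb, fun j hj => by
      simp only [Perm.mul_apply, hb2 j hj, ha2 j hj]⟩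
  inv_mem' := by
    rintro a ⟨ha, ha2⟩
    refine ⟨inv_mem ha, fun j hj => ?_⟩
    conv_lhs => rw [← ha2 j hj]
    exact Equiv.symm_apply_apply a _

private lemma mem_Hs {i : ℕ} {g : Perm (Fin 25)} :
    g ∈ Hs i ↔ g ∈ Gg ∧ ∀ j : Fin 8, (j : ℕ) < i → g (bp j) = bp j := Iff.rfl

private def Ot (i : ℕ) : Finset (Fin 25) :=
  Finset.univ.filter (fun x => x ≠ 0 ∧ ∀ j : Fin 8, (j : ℕ) < i → cI x ≠ cI (bp j))

private def gv : Fin 6 → Perm (Fin 25) := ![U, L, F, R, B, D]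
private def wd : ℕ → Fin 25 → List (Fin 6)
  | 0 => ![[], [], [0], [0,0], [0,0,0], [0,1], [1,4,0], [1,0,2,1], [4], [1], [2,1], [2,2,1], [5,4], [0,0,4,0], [4,4,4], [3,4,4,4], [2,0,0], [3,0,0], [0,0,2,1], [1,1,1], [3,0], [1,1], [3,3,0], [4,4], [4,4,0]]
  | 1 => ![[], [], [], [1,1,0,1,1], [2,2,3,3], [], [2,2,5,5,5,3], [2,3,3], [5,3], [2,5,5,3], [3,3,3], [2,3,3,3], [5,5,3], [2,2,2,3,3], [3,2,2,2,3,3], [5,5,2,3,3], [5,5,5,3], [1,1,0,4,1,1], [], [5,5,2,3,3,3], [3], [5,5,5,3,3], [3,3], [5,3,3], [5,5,3,3]]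
  | 2 => ![[], [], [], [], [2,2,5,2,2], [], [2,2,2], [2,5,2,2], [5,5,2], [2,5,5,5,2], [2,2,5,5,5,2], [5,2,5,2,2], [5,5,5,2], [2,2,2,5,2,2], [], [5,5,2,5,2,2], [2], [], [], [1,2,1,1,1,2], [5,2], [2,2], [5,2,2], [5,5,2,2], [5,5,5,2,2]]
  | 3 => ![[], [], [], [], [], [], [1,0,0,1,2,4,5,5,4,3], [1,1,1,5,5,5,1], [5,5,1,1,1,5,1], [1,1,1,5,1,2,5,2,2,2], [], [0,2,2,2,0,0,0,1], [2,5,2,2,2], [], [], [2,5,5,2,2,2], [1,1,1,5,1], [], [], [2,5,5,5,2,2,2], [1,1,1,5,5,1], [0,0,2,0,0,5,4,1,4,4], [1,2,1,1,5,5,1,2], [2,1,1,1,5,1,2,2], [2,2,4,3,3,2,0,0,2]]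
  | 4 => ![[], [], [], [], [], [], [], [], [1,3,2,2,1,0,0,1,1], [], [], [5], [0,2,2,0,0,4,5,0,1,1], [], [], [5,5], [3,3,5,5,3,0,0,1,1,0,0], [], [], [5,5,5], [0,0,0,2,2,0,5,3,5,5,3,3], [0,1,1,0,0,3,5,0,4,4], [4,4,5,5,4,0,0,2,2,0,0], [1,2,1,1,0,4,0,0,1,4], [2,4,3,3,2,0,0,2,2]]
  | 5 => ![[], [], [], [], [], [], [], [], [], [], [], [2,2,4,0,0,5,2,2,2,1,0,1,0], [], [], [], [2,2,2,3,3,3,5,1,2,0,1,1,1], [4,1,3,4,5,5,1,1,2,0,0,1,0], [], [], [0,0,1,2,1,1,5,3,5,0,3,2], [3,5,4,3,3,5,0,1,0,1,0,2,0], [], [0,0,1,0,1,0,0,1,4,1,2,0,0,1], [0,0,1,0,1,0,0,4,3,0,0,2,0,2], [1,2,0,2,0,1,5,4,3,0,1,2]]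
  | 6 => ![[], [], [], [], [], [], [], [], [], [], [], [], [], [], [], [1,1,5,1,2,2,3,2,0,0,0,2,0,1,0,0,0], [0,0,1,0,2,2,2,1,2,5,3,1,4,2,5,1,2,2], [], [], [], [1,0,1,0,5,2,3,0,0,1,0,1,0,0,0], [], [0,0,1,0,2,2,2,1,0,0,0,3,4,0,0,2,2,1], [1,2,1,3,5,4,5,5,0,2,1,0,1,1,1,0,0], []]
  | _ => fun _ => []

private def Tt (i : ℕ) (k : Fin 25) : Perm (Fin 25) := ((wd i k).map gv).prod

private lemma gv_mem : ∀ m : Fin 6, gv m ∈ Gg := by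
  intro m
  apply Subgroup.subset_closure
  fin_cases m
  · exact Set.mem_insert _ _
  · exact Set.mem_insert_of_mem _ (Set.mem_insert _ _)
  · exact Set.mem_insert_of_mem _ (Set.mem_insert_of_mem _ (Set.mem_insert _ _))
  · exact Set.mem_insert_of_mem _ (Set.mem_insert_of_mem _ (Set.mem_insert_of_mem _
      (Set.mem_insert _ _)))
  · exact Set.mem_insert_of_mem _ (Set.mem_insert_of_mem _ (Set.mem_insert_of_mem _
      (Set.mem_insert_of_mem _ (Set.mem_insert _ _))))
  · exact Set.mem_insert_of_mem _ (Set.mem_insert_of_mem _ (Set.mem_insert_of_mem _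
      (Set.mem_insert_of_mem _ (Set.mem_insert_of_mem _ rfl))))

private lemma Tt_mem (i : ℕ) (k : Fin 25) : Tt i k ∈ Gg := by
  show ((wd i k).map gv).prod ∈ Gg
  refine list_prod_mem ?_
  intro x hx
  obtain ⟨m, -, rfl⟩ := List.mem_map.mp hx
  exact gv_mem m

private lemma upper {i : ℕ} (hi : i < 8) {g : Perm (Fin 25)} (hg : g ∈ Hs i) :
    g (bp ⟨i, hi⟩) ∈ Ot i := by
  obtain ⟨hG, hfix⟩ := mem_Hs.mp hg
  obtain ⟨h0, hc, -⟩ := cinv_closure g hG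
  simp only [Ot, Finset.mem_filter, Finset.mem_univ, true_and]
  refine ⟨nz h0 _ (L_b ⟨i, hi⟩).2.2, ?_⟩
  intro j hj he
  have hI := (main_lemma h0 hc (bp ⟨i, hi⟩) (L_b _).2.2).1
  rw [(L_b ⟨i, hi⟩).1] at hI
  have hJ : sg g j = j := by
    simp only [sg, hfix j hj, (L_b j).1]
  rw [hI, (L_b j).1, ← hJ] at he
  have h2 : i = (j : ℕ) := congrArg Fin.val (sg_inj h0 hc he)
  omega

private lemma step (i : ℕ) (hi7 : i < 7)
    (hTT : ∀ k ∈ Ot i, (∀ j : Fin 8, (j : ℕ) < i → Tt i k (bp j) = bp j) ∧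
      Tt i k (bp ⟨i, by omega⟩) = k) :
    Nat.card (Hs i) = (Ot i).card * Nat.card (Hs (i + 1)) := by
  have hi8 : i < 8 := by omega
  have key : ∀ g : Hs i, ((Tt i (g.1 (bp ⟨i, hi8⟩)))⁻¹ * g.1) ∈ Hs (i + 1) := by
    intro g
    have hk := upper hi8 g.2
    obtain ⟨hfx, hbi⟩ := hTT _ hk
    obtain ⟨hG, hfix⟩ := mem_Hs.mp g.2
    refine mem_Hs.mpr ⟨mul_mem (inv_mem (Tt_mem _ _)) hG, fun j hj => ?_⟩
    rcases Nat.lt_or_ge (j : ℕ) i with h | h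
    · simp only [Perm.mul_apply, hfix j h]
      conv_lhs => rw [← hfx j h]
      exact Equiv.symm_apply_apply (Tt i _) _
    · have hji : j = ⟨i, hi8⟩ := Fin.ext (show (j : ℕ) = i by omega)
      subst hji
      simp only [Perm.mul_apply, Perm.inv_def]
      exact (Equiv.symm_apply_eq _).mpr hbi.symm
  have keyinv : ∀ (k : Ot i) (h : Hs (i + 1)), (Tt i k.1 * h.1) ∈ Hs i := by
    rintro ⟨k, hk⟩ ⟨h, hh⟩
    obtain ⟨hfx, hbi⟩ := hTT _ hk
    obtain ⟨hG, hfix⟩ := mem_Hs.mp hh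
    refine mem_Hs.mpr ⟨mul_mem (Tt_mem _ _) hG, fun j hj => ?_⟩
    simp only [Perm.mul_apply, hfix j (Nat.lt_succ_of_lt hj), hfx j hj]
  have apval : ∀ (k : Ot i) (h : Hs (i + 1)), (Tt i k.1 * h.1) (bp ⟨i, hi8⟩) = k.1 := by
    rintro ⟨k, hk⟩ ⟨h, hh⟩
    obtain ⟨-, hfix⟩ := mem_Hs.mp hh
    simp only [Perm.mul_apply, hfix ⟨i, hi8⟩ (Nat.lt_succ_self i), (hTT _ hk).2]
  let e : Hs i ≃ Ot i × Hs (i + 1) :=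
    { toFun := fun g => (⟨g.1 (bp ⟨i, hi8⟩), upper hi8 g.2⟩, ⟨_, key g⟩)
      invFun := fun p => ⟨Tt i p.1.1 * p.2.1, keyinv p.1 p.2⟩
      left_inv := fun g => by
        apply Subtype.ext
        simp only [mul_inv_cancel_left]
      right_inv := fun p => by
        have hv := apval p.1 p.2
        refine Prod.ext (Subtype.ext ?_) (Subtype.ext ?_)
        · exact hv
        · simp only [hv, inv_mul_cancel_left] }
  rw [Nat.card_congr e, Nat.card_prod, Nat.card_eq_finsetCard]

private lemma Ot_card : (Ot 0).card = 24 ∧ (Ot 1).card = 21 ∧ (Ot 2).card = 18 ∧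
    (Ot 3).card = 15 ∧ (Ot 4).card = 12 ∧ (Ot 5).card = 9 ∧ (Ot 6).card = 6 := by decide

private lemma hT : ∀ i : Fin 7, ∀ k ∈ Ot (i : ℕ),
    (∀ j : Fin 8, (j : ℕ) < (i : ℕ) → Tt (i : ℕ) k (bp j) = bp j) ∧
    Tt (i : ℕ) k (bp ⟨(i : ℕ), by omega⟩) = k := by decide

private lemma Hs_zero : Hs 0 = Gg := by
  ext g
  simp only [mem_Hs, Nat.not_lt_zero, false_implies, implies_true, and_true]

private lemma Hs_seven : Hs 7 = ⊥ := by
  refine le_antisymm ?_ bot_le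
  intro g hg
  obtain ⟨hG, hfix⟩ := mem_Hs.mp hg
  obtain ⟨h0, hc, ht⟩ := cinv_closure g hG
  have hkk : ∀ j : Fin 8, (j : ℕ) < 7 → kk g j = 0 := by
    intro j hj
    simp only [kk, hfix j hj]
    exact (L_b j).2.1
  have hsg : ∀ j : Fin 8, (j : ℕ) < 7 → sg g j = j := by
    intro j hj
    simp only [sg, hfix j hj, (L_b j).1]
  have hsg7 : sg g 7 = 7 := by
    by_contra hne
    have hlt : ((sg g 7 : Fin 8) : ℕ) < 7 := by
      rcases Nat.lt_or_ge ((sg g 7 : Fin 8) : ℕ) 7 with h | h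
      · exact h
      · exact absurd (Fin.ext (by omega : ((sg g 7 : Fin 8) : ℕ) = (7 : Fin 8))) hne
    exact hne (sg_inj h0 hc (hsg (sg g 7) hlt))
  have hkk7 : kk g 7 = 0 := by
    have hsum : tw g = kk g 0 + kk g 1 + kk g 2 + kk g 3 + kk g 4 + kk g 5 + kk g 6 + kk g 7 := by
      simp [tw, Fin.sum_univ_eight]
    rw [hsum] at ht
    rw [hkk 0 (by decide), hkk 1 (by decide), hkk 2 (by decide), hkk 3 (by decide),
      hkk 4 (by decide), hkk 5 (by decide), hkk 6 (by decide)] at ht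
    simpa using ht
  have hall : ∀ j : Fin 8, kk g j = 0 ∧ sg g j = j := by
    intro j
    rcases Nat.lt_or_ge (j : ℕ) 7 with h | h
    · exact ⟨hkk j h, hsg j h⟩
    · have : j = 7 := Fin.ext (by omega)
      subst this
      exact ⟨hkk7, hsg7⟩
  have : g = 1 := by
    apply Equiv.ext
    intro x
    rcases eq_or_ne x 0 with rfl | hx
    · simpa using h0
    · have hm := main_lemma h0 hc x hx
      have hgx : g x ≠ 0 := nz h0 x hx
      have := L_nf (g x) hgx
      rw [hm.1, hm.2, (hall (cI x)).1, (hall (cI x)).2, add_zero] at this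
      rw [L_nf x hx] at this
      simpa using this.symm
  simp [this, Subgroup.mem_bot]

private lemma Gg_card : Nat.card Gg = 88179840 := by
  obtain ⟨c0, c1, c2, c3, c4, c5, c6⟩ := Ot_card
  have s0 := step 0 (by norm_num) (hT 0)
  have s1 := step 1 (by norm_num) (hT 1)
  have s2 := step 2 (by norm_num) (hT 2)
  have s3 := step 3 (by norm_num) (hT 3)
  have s4 := step 4 (by norm_num) (hT 4)
  have s5 := step 5 (by norm_num) (hT 5)
  have s6 := step 6 (by norm_num) (hT 6)
  have h7 : Nat.card (Hs 7) = 1 := by rw [Hs_seven]; exact Subgroup.card_bot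
  rw [← Hs_zero, s0, s1, s2, s3, s4, s5, s6, h7, c0, c1, c2, c3, c4, c5, c6]

/-- The Pocket Cube group: the subgroup of permutations of the 24 facets (labelled
1,…,24; 0 is unused) generated by the six 90° face rotations. -/
theorem pocket_cube_order :
    Nat.card (Subgroup.closure
      ({ c[(1 : Fin 25), 2, 3, 4] * c[(5 : Fin 25), 17, 13, 9] * c[(6 : Fin 25), 18, 14, 10],
         c[(1 : Fin 25), 9, 21, 19] * c[(4 : Fin 25), 12, 24, 18] * c[(5 : Fin 25), 6, 7, 8],
         c[(9 : Fin 25), 10, 11, 12] * c[(4 : Fin 25), 13, 22, 7] * c[(3 : Fin 25), 16, 21, 6],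
         c[(13 : Fin 25), 14, 15, 16] * c[(2 : Fin 25), 20, 22, 10] * c[(3 : Fin 25), 17, 23, 11],
         c[(17 : Fin 25), 18, 19, 20] * c[(1 : Fin 25), 8, 23, 14] * c[(2 : Fin 25), 5, 24, 15],
         c[(21 : Fin 25), 22, 23, 24] * c[(12 : Fin 25), 16, 20, 8] * c[(11 : Fin 25), 15, 19, 7] }
        : Set (Equiv.Perm (Fin 25)))) = 88179840 :=
  Gg_card
end

section
/- The Pocket Cube group (generated by the six face rotations above) has a normal subgroup of order 2187 isomorphic to C₃⁷ (the direct product of seven copies of the cyclic group of order 3), and the quotient by this subgroup is isomorphic to the symmetric group S₈. -/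
set_option maxRecDepth 40000

open Equiv

namespace PC

def Ug : Perm (Fin 25) := c[(1 : Fin 25), 2, 3, 4] * c[(5 : Fin 25), 17, 13, 9] * c[(6 : Fin 25), 18, 14, 10]
def Lg : Perm (Fin 25) := c[(1 : Fin 25), 9, 21, 19] * c[(4 : Fin 25), 12, 24, 18] * c[(5 : Fin 25), 6, 7, 8]
def Fg : Perm (Fin 25) := c[(9 : Fin 25), 10, 11, 12] * c[(4 : Fin 25), 13, 22, 7] * c[(3 : Fin 25), 16, 21, 6]
def Rg : Perm (Fin 25) := c[(13 : Fin 25), 14, 15, 16] * c[(2 : Fin 25), 20, 22, 10] * c[(3 : Fin 25), 17, 23, 11]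
def Bg : Perm (Fin 25) := c[(17 : Fin 25), 18, 19, 20] * c[(1 : Fin 25), 8, 23, 14] * c[(2 : Fin 25), 5, 24, 15]
def Dg : Perm (Fin 25) := c[(21 : Fin 25), 22, 23, 24] * c[(12 : Fin 25), 16, 20, 8] * c[(11 : Fin 25), 15, 19, 7]

def gset : Set (Perm (Fin 25)) := {Ug, Lg, Fg, Rg, Bg, Dg}

/-- corner (block) of each sticker; value at 0 is junk -/
def pc : Fin 25 → Fin 8 := ![0, 0,1,2,3, 0,3,4,5, 3,2,6,4, 2,1,7,6, 1,0,5,7, 4,6,7,5]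
/-- orientation marking of each sticker -/
def om : Fin 25 → ZMod 3 := ![0, 0,0,0,0, 1,2,0,0, 1,2,0,1, 1,2,0,1, 1,2,2,1, 2,2,2,1]
/-- a representative sticker of each corner -/
def reps : Fin 8 → Fin 25 := ![1,2,3,4,7,8,11,15]

lemma pc_reps : ∀ b, pc (reps b) = b := by decide
lemma reps_ne : ∀ b, reps b ≠ 0 := by decide
lemma key_inj : ∀ x y : Fin 25, x ≠ 0 → y ≠ 0 → pc x = pc y → om x = om y → x = y := by decide

def Good (g : Perm (Fin 25)) : Prop :=
  g 0 = 0 ∧ (∃ σ : Perm (Fin 8), ∀ x : Fin 25, x ≠ 0 → pc (g x) = σ (pc x)) ∧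
  (∀ x y : Fin 25, x ≠ 0 → y ≠ 0 → pc x = pc y → om (g x) - om x = om (g y) - om y) ∧
  (∑ b : Fin 8, (om (g (reps b)) - om (reps b))) = 0

lemma perm_apply_inv_self {α : Type*} (f : Perm α) (x : α) : f (f⁻¹ x) = x := f.apply_symm_apply x
lemma perm_inv_apply_self {α : Type*} (f : Perm α) (x : α) : f⁻¹ (f x) = x := f.symm_apply_apply x

def H : Subgroup (Perm (Fin 25)) where
  carrier := {g | Good g}
  one_mem' := ⟨rfl, ⟨1, fun x _ => rfl⟩, by intro x y _ _ _; simp, by simp⟩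
  mul_mem' := by
    rintro g h ⟨hg0, ⟨σg, hσg⟩, hRg, hSg⟩ ⟨hh0, ⟨σh, hσh⟩, hRh, hSh⟩
    have hne : ∀ x : Fin 25, x ≠ 0 → h x ≠ 0 := by
      intro x hx hc
      exact hx (h.injective (hc.trans hh0.symm))
    refine ⟨?_, ⟨σg * σh, ?_⟩, ?_, ?_⟩
    · show g (h 0) = 0
      rw [hh0, hg0]
    · intro x hx
      show pc (g (h x)) = σg (σh (pc x))
      rw [hσg _ (hne x hx), hσh _ hx]
    · intro x y hx hy hxy
      show om (g (h x)) - om x = om (g (h y)) - om y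
      have h1 : pc (h x) = pc (h y) := by rw [hσh _ hx, hσh _ hy, hxy]
      have h2 := hRg (h x) (h y) (hne x hx) (hne y hy) h1
      have h3 := hRh x y hx hy hxy
      have : om (g (h x)) - om (h x) + (om (h x) - om x)
           = om (g (h y)) - om (h y) + (om (h y) - om y) := by rw [h2, h3]
      calc om (g (h x)) - om x = om (g (h x)) - om (h x) + (om (h x) - om x) := by ring
        _ = om (g (h y)) - om (h y) + (om (h y) - om y) := this
        _ = om (g (h y)) - om y := by ring
    · have hterm : ∀ b : Fin 8, om ((g * h) (reps b)) - om (reps b)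
          = (om (g (reps (σh b))) - om (reps (σh b))) + (om (h (reps b)) - om (reps b)) := by
        intro b
        have hx : h (reps b) ≠ 0 := hne _ (reps_ne b)
        have h1 : pc (h (reps b)) = pc (reps (σh b)) := by
          rw [hσh _ (reps_ne b), pc_reps, pc_reps]
        have h2 := hRg (h (reps b)) (reps (σh b)) hx (reps_ne _) h1
        show om (g (h (reps b))) - om (reps b) = _
        calc om (g (h (reps b))) - om (reps b)
            = (om (g (h (reps b))) - om (h (reps b))) + (om (h (reps b)) - om (reps b)) := by ring
          _ = _ := by rw [h2]
      rw [Finset.sum_congr rfl (fun b _ => hterm b), Finset.sum_add_distrib]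
      rw [Equiv.sum_comp σh (fun c => om (g (reps c)) - om (reps c)), hSg, hSh, add_zero]
  inv_mem' := by
    rintro g ⟨hg0, ⟨σ, hσ⟩, hR, hS⟩
    have hginv0 : g⁻¹ 0 = 0 := by
      conv_lhs => rw [← hg0]
      exact g.symm_apply_apply 0
    have hne : ∀ x : Fin 25, x ≠ 0 → g⁻¹ x ≠ 0 := by
      intro x hx hc
      exact hx (g⁻¹.injective (hc.trans hginv0.symm))
    have hpc : ∀ x : Fin 25, x ≠ 0 → pc (g⁻¹ x) = σ⁻¹ (pc x) := by
      intro x hx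
      have : pc (g (g⁻¹ x)) = σ (pc (g⁻¹ x)) := hσ _ (hne x hx)
      rw [perm_apply_inv_self] at this
      rw [this, perm_inv_apply_self]
    refine ⟨hginv0, ⟨σ⁻¹, hpc⟩, ?_, ?_⟩
    · intro x y hx hy hxy
      have h1 : pc (g⁻¹ x) = pc (g⁻¹ y) := by rw [hpc _ hx, hpc _ hy, hxy]
      have h2 := hR (g⁻¹ x) (g⁻¹ y) (hne x hx) (hne y hy) h1
      rw [perm_apply_inv_self, perm_apply_inv_self] at h2
      have : om x - om (g⁻¹ x) = om y - om (g⁻¹ y) := h2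
      calc om (g⁻¹ x) - om x = -(om x - om (g⁻¹ x)) := by ring
        _ = -(om y - om (g⁻¹ y)) := by rw [this]
        _ = om (g⁻¹ y) - om y := by ring
    · have hterm : ∀ b : Fin 8, om (g⁻¹ (reps b)) - om (reps b)
          = -(om (g (reps (σ⁻¹ b))) - om (reps (σ⁻¹ b))) := by
        intro b
        have hx : g⁻¹ (reps b) ≠ 0 := hne _ (reps_ne b)
        have h1 : pc (g⁻¹ (reps b)) = pc (reps (σ⁻¹ b)) := by
          rw [hpc _ (reps_ne b), pc_reps, pc_reps]
        have h2 := hR (g⁻¹ (reps b)) (reps (σ⁻¹ b)) hx (reps_ne _) h1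
        rw [perm_apply_inv_self] at h2
        calc om (g⁻¹ (reps b)) - om (reps b)
            = -(om (reps b) - om (g⁻¹ (reps b))) := by ring
          _ = -(om (g (reps (σ⁻¹ b))) - om (reps (σ⁻¹ b))) := by rw [h2]
      rw [Finset.sum_congr rfl (fun b _ => hterm b), Finset.sum_neg_distrib,
        Equiv.sum_comp σ⁻¹ (fun c => om (g (reps c)) - om (reps c)), hS, neg_zero]

abbrev G := Subgroup.closure gset

lemma gset_sub : gset ⊆ (H : Set (Perm (Fin 25))) := by
  rintro g (rfl | rfl | rfl | rfl | rfl | rfl)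
  · exact ⟨by decide, ⟨c[(0:Fin 8),1,2,3], by decide⟩, by decide, by decide⟩
  · exact ⟨by decide, ⟨c[(0:Fin 8),3,4,5], by decide⟩, by decide, by decide⟩
  · exact ⟨by decide, ⟨c[(2:Fin 8),6,4,3], by decide⟩, by decide, by decide⟩
  · exact ⟨by decide, ⟨c[(1:Fin 8),7,6,2], by decide⟩, by decide, by decide⟩
  · exact ⟨by decide, ⟨c[(0:Fin 8),5,7,1], by decide⟩, by decide, by decide⟩
  · exact ⟨by decide, ⟨c[(4:Fin 8),6,7,5], by decide⟩, by decide, by decide⟩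

lemma good (g : G) : Good (g : Perm (Fin 25)) :=
  (Subgroup.closure_le H).mpr gset_sub g.2

lemma g_zero (g : G) : (g : Perm (Fin 25)) 0 = 0 := (good g).1

lemma g_ne (g : G) {x : Fin 25} (hx : x ≠ 0) : (g : Perm (Fin 25)) x ≠ 0 := by
  intro hc
  exact hx ((g : Perm (Fin 25)).injective (hc.trans (g_zero g).symm))

noncomputable def sig (g : G) : Perm (Fin 8) := (good g).2.1.choose

lemma sig_spec (g : G) : ∀ x : Fin 25, x ≠ 0 → pc ((g : Perm (Fin 25)) x) = sig g (pc x) :=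
  (good g).2.1.choose_spec

lemma sig_unique (g : G) (σ : Perm (Fin 8))
    (h : ∀ x : Fin 25, x ≠ 0 → pc ((g : Perm (Fin 25)) x) = σ (pc x)) : sig g = σ := by
  apply Equiv.ext
  intro b
  have h1 := h (reps b) (reps_ne b)
  have h2 := sig_spec g (reps b) (reps_ne b)
  rw [pc_reps] at h1 h2
  rw [← h1, ← h2]

noncomputable def phi : G →* Perm (Fin 8) where
  toFun := sig
  map_one' := by
    apply sig_unique
    intro x _
    rfl
  map_mul' g h := by
    apply sig_unique
    intro x hx
    show pc ((g : Perm (Fin 25)) ((h : Perm (Fin 25)) x)) = sig g (sig h (pc x))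
    rw [sig_spec g _ (g_ne h hx), sig_spec h _ hx]

lemma phi_eq (g : G) (σ : Perm (Fin 8))
    (h : ∀ x : Fin 25, x ≠ 0 → pc ((g : Perm (Fin 25)) x) = σ (pc x)) : phi g = σ :=
  sig_unique g σ h

def gU : G := ⟨Ug, Subgroup.subset_closure (by left; rfl)⟩
def gL : G := ⟨Lg, Subgroup.subset_closure (by right; left; rfl)⟩
def gF : G := ⟨Fg, Subgroup.subset_closure (by right; right; left; rfl)⟩
def gR : G := ⟨Rg, Subgroup.subset_closure (by right; right; right; left; rfl)⟩
def gB : G := ⟨Bg, Subgroup.subset_closure (by right; right; right; right; left; rfl)⟩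
def gD : G := ⟨Dg, Subgroup.subset_closure (by right; right; right; right; right; rfl)⟩

lemma phi_U : phi gU = c[(0:Fin 8),1,2,3] := phi_eq _ _ (by decide)
lemma phi_L : phi gL = c[(0:Fin 8),3,4,5] := phi_eq _ _ (by decide)
lemma phi_F : phi gF = c[(2:Fin 8),6,4,3] := phi_eq _ _ (by decide)
lemma phi_R : phi gR = c[(1:Fin 8),7,6,2] := phi_eq _ _ (by decide)
lemma phi_B : phi gB = c[(0:Fin 8),5,7,1] := phi_eq _ _ (by decide)
lemma phi_D : phi gD = c[(4:Fin 8),6,7,5] := phi_eq _ _ (by decide)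

lemma phi_surj : Function.Surjective phi := by
  rw [← MonoidHom.range_eq_top]
  have hcyc : (c[(0:Fin 8),3,1,4,5,7,6,2] : Perm (Fin 8)).IsCycle :=
    Cycle.isCycle_formPerm _ _ ⟨0, 3, by decide, by decide, by decide⟩
  have hsupp : (c[(0:Fin 8),3,1,4,5,7,6,2] : Perm (Fin 8)).support = Finset.univ := by decide
  rw [eq_top_iff, ← Perm.closure_cycle_adjacent_swap hcyc hsupp 0, Subgroup.closure_le]
  rintro s (rfl | rfl)
  · refine ⟨gR * gU * gL * gU * gU, ?_⟩
    simp only [map_mul, phi_U, phi_L, phi_R]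
    decide
  · refine ⟨gL * gB * gD * gF * gU, ?_⟩
    simp only [map_mul, phi_U, phi_L, phi_B, phi_D, phi_F]
    decide

noncomputable def N : Subgroup G := phi.ker

lemma mem_N_iff (g : G) : g ∈ N ↔ phi g = 1 := MonoidHom.mem_ker

lemma pc_fix {n : G} (hn : n ∈ N) : ∀ x : Fin 25, x ≠ 0 →
    pc ((n : Perm (Fin 25)) x) = pc x := by
  intro x hx
  rw [sig_spec n x hx]
  have : sig n = 1 := (mem_N_iff n).mp hn
  rw [this, Perm.one_apply]

def tw (g : G) (b : Fin 8) : ZMod 3 := om ((g : Perm (Fin 25)) (reps b)) - om (reps b)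

lemma tw_sum (g : G) : ∑ b : Fin 8, tw g b = 0 := (good g).2.2.2

lemma tw_spec {n : G} (hn : n ∈ N) (x : Fin 25) (hx : x ≠ 0) :
    om ((n : Perm (Fin 25)) x) - om x = tw n (pc x) := by
  have h1 : pc x = pc (reps (pc x)) := (pc_reps _).symm
  exact (good n).2.2.1 x (reps (pc x)) hx (reps_ne _) h1

lemma tw_mul {m n : G} (hm : m ∈ N) (hn : n ∈ N) :
    tw (m * n) = tw m + tw n := by
  funext b
  have hx : (n : Perm (Fin 25)) (reps b) ≠ 0 := g_ne n (reps_ne b)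
  have h1 : pc ((n : Perm (Fin 25)) (reps b)) = b := by
    rw [pc_fix hn _ (reps_ne b), pc_reps]
  have h2 := tw_spec hm ((n : Perm (Fin 25)) (reps b)) hx
  rw [h1] at h2
  show om ((m : Perm (Fin 25)) ((n : Perm (Fin 25)) (reps b))) - om (reps b) = tw m b + tw n b
  calc om ((m : Perm (Fin 25)) ((n : Perm (Fin 25)) (reps b))) - om (reps b)
      = (om ((m : Perm (Fin 25)) ((n : Perm (Fin 25)) (reps b)))
          - om ((n : Perm (Fin 25)) (reps b)))
        + (om ((n : Perm (Fin 25)) (reps b)) - om (reps b)) := by ring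
    _ = tw m b + tw n b := by rw [h2]; rfl

noncomputable def chi : N →* (Fin 7 → Multiplicative (ZMod 3)) where
  toFun n i := Multiplicative.ofAdd (tw n.1 i.castSucc)
  map_one' := by
    funext i
    show Multiplicative.ofAdd (tw 1 i.castSucc) = 1
    have : tw 1 i.castSucc = 0 := by simp [tw]
    rw [this]
    rfl
  map_mul' m n := by
    funext i
    show Multiplicative.ofAdd (tw (m.1 * n.1) i.castSucc) = _
    rw [tw_mul m.2 n.2]
    rfl

lemma chi_inj : Function.Injective chi := by
  intro m n h
  suffices hmn : ∀ k : N, chi k = 1 → k = 1 by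
    have h1 : m * n⁻¹ = 1 := hmn (m * n⁻¹) (by rw [map_mul, h, map_inv, mul_inv_cancel])
    exact mul_inv_eq_one.mp h1
  intro k hk
  have h7 : ∀ i : Fin 7, tw k.1 i.castSucc = 0 := by
    intro i
    have := congrFun hk i
    exact Multiplicative.ofAdd.injective this
  have hlast : tw k.1 (Fin.last 7) = 0 := by
    have hs := tw_sum k.1
    rw [Fin.sum_univ_castSucc] at hs
    simp only [h7, Finset.sum_const_zero, zero_add] at hs
    exact hs
  have hall : ∀ b : Fin 8, tw k.1 b = 0 := by
    intro b
    rcases Fin.eq_castSucc_or_eq_last b with ⟨i, rfl⟩ | rfl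
    · exact h7 i
    · exact hlast
  apply Subtype.ext
  apply Subtype.ext
  apply Equiv.ext
  intro x
  by_cases hx : x = 0
  · subst hx
    rw [g_zero k.1]
    rfl
  · have h1 : pc ((k.1 : Perm (Fin 25)) x) = pc x := pc_fix k.2 x hx
    have h2 : om ((k.1 : Perm (Fin 25)) x) = om x := by
      have := tw_spec k.2 x hx
      rw [hall] at this
      exact sub_eq_zero.mp this
    exact key_inj _ _ (g_ne k.1 hx) hx h1 h2

@[simp] lemma gU_coe : ((gU : G) : Perm (Fin 25)) = Ug := rfl
@[simp] lemma gL_coe : ((gL : G) : Perm (Fin 25)) = Lg := rfl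
@[simp] lemma gF_coe : ((gF : G) : Perm (Fin 25)) = Fg := rfl
@[simp] lemma gR_coe : ((gR : G) : Perm (Fin 25)) = Rg := rfl
@[simp] lemma gB_coe : ((gB : G) : Perm (Fin 25)) = Bg := rfl
@[simp] lemma gD_coe : ((gD : G) : Perm (Fin 25)) = Dg := rfl

def q0x0 : Perm (Fin 25) := Equiv.mk ![0, 14, 10, 16, 4, 2, 6, 18, 19, 9, 11, 7, 1, 22, 13, 15, 12, 3, 17, 24, 20, 5, 21, 23, 8] ![0, 12, 5, 17, 4, 21, 6, 11, 24, 9, 2, 10, 16, 14, 1, 15, 3, 18, 7, 8, 20, 22, 13, 23, 19] (by decide) (by decide)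
lemma q0x0_eq : Ug * Lg * Ug * Lg * Ug * Lg * Ug * Lg * Ug * Lg * Ug * Fg = q0x0 := Equiv.ext (by decide)
def q0x1 : Perm (Fin 25) := Equiv.mk ![0, 14, 12, 5, 3, 2, 10, 6, 8, 13, 1, 11, 4, 18, 7, 15, 16, 21, 17, 19, 20, 9, 22, 23, 24] ![0, 10, 5, 4, 12, 3, 7, 14, 8, 21, 6, 11, 2, 9, 1, 15, 16, 18, 13, 19, 20, 17, 22, 23, 24] (by decide) (by decide)
lemma q0x1_eq : Ug * Fg * Ug * Fg * Ug * Fg * Ug * Fg * Ug * Fg⁻¹ * Ug * Fg⁻¹ = q0x1 := Equiv.ext (by decide)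
def q0x2 : Perm (Fin 25) := Equiv.mk ![0, 14, 10, 5, 21, 2, 12, 22, 8, 7, 1, 9, 11, 18, 13, 23, 6, 3, 17, 19, 15, 16, 4, 20, 24] ![0, 10, 5, 17, 22, 3, 16, 9, 8, 11, 2, 12, 6, 14, 1, 20, 21, 18, 13, 19, 23, 4, 7, 15, 24] (by decide) (by decide)
lemma q0x2_eq : Ug * Fg⁻¹ * Ug * Rg * Ug * Rg * Ug * Rg * Ug * Rg * Ug * Rg = q0x2 := Equiv.ext (by decide)
def q0x3 : Perm (Fin 25) := Equiv.mk ![0, 14, 9, 22, 18, 2, 5, 7, 8, 1, 16, 20, 12, 11, 4, 13, 23, 6, 17, 19, 10, 21, 15, 3, 24] ![0, 9, 5, 23, 14, 6, 17, 7, 8, 2, 20, 13, 12, 15, 1, 22, 10, 18, 4, 19, 11, 21, 3, 16, 24] (by decide) (by decide)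
lemma q0x3_eq : Ug * Rg * Ug * Rg * Ug * Rg * Ug * Rg * Ug * Rg * Ug * Rg⁻¹ = q0x3 := Equiv.ext (by decide)
def q0x4 : Perm (Fin 25) := Equiv.mk ![0, 24, 18, 17, 4, 19, 6, 12, 10, 9, 2, 15, 21, 14, 5, 22, 20, 1, 8, 13, 11, 7, 23, 16, 3] ![0, 17, 10, 24, 4, 14, 6, 21, 18, 9, 8, 20, 7, 19, 13, 11, 23, 3, 2, 5, 16, 12, 15, 22, 1] (by decide) (by decide)
lemma q0x4_eq : Ug * Rg⁻¹ * Ug * Rg⁻¹ * Lg * Fg * Lg * Fg * Lg * Fg * Lg * Fg = q0x4 := Equiv.ext (by decide)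
def q0x5 : Perm (Fin 25) := Equiv.mk ![0, 4, 2, 11, 3, 9, 10, 7, 1, 13, 22, 8, 12, 16, 14, 15, 24, 17, 6, 18, 20, 21, 19, 23, 5] ![0, 8, 2, 4, 1, 24, 18, 7, 11, 5, 6, 3, 12, 9, 14, 15, 13, 17, 19, 22, 20, 21, 10, 23, 16] (by decide) (by decide)
lemma q0x5_eq : Lg * Fg * Lg * Fg * Lg * Fg * Lg * Fg * Lg * Fg * Lg * Fg = q0x5 := Equiv.ext (by decide)
def w0 : G := (gU * gL * gU * gL * gU * gL * gU * gL * gU * gL * gU * gF) * (gU * gF * gU * gF * gU * gF * gU * gF * gU * gF⁻¹ * gU * gF⁻¹) * (gU * gF⁻¹ * gU * gR * gU * gR * gU * gR * gU * gR * gU * gR) * (gU * gR * gU * gR * gU * gR * gU * gR * gU * gR * gU * gR⁻¹) * (gU * gR⁻¹ * gU * gR⁻¹ * gL * gF * gL * gF * gL * gF * gL * gF) * (gL * gF * gL * gF * gL * gF * gL * gF * gL * gF * gL * gF)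
def q0 : Perm (Fin 25) := q0x0 * q0x1 * q0x2 * q0x3 * q0x4 * q0x5
lemma w0_perm : ((w0 : G) : Perm (Fin 25)) = q0 := by
  simp only [w0, Subgroup.coe_mul, InvMemClass.coe_inv, gU_coe, gL_coe, gF_coe, gR_coe, gB_coe, gD_coe]
  rw [q0x0_eq, q0x1_eq, q0x2_eq, q0x3_eq, q0x4_eq, q0x5_eq]
  rfl

lemma w0_mem : w0 ∈ N := by
  rw [mem_N_iff]
  simp only [w0, map_mul, map_inv, phi_U, phi_L, phi_F, phi_R, phi_B, phi_D]
  decide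

lemma chi_w0 : chi ⟨w0, w0_mem⟩ = Pi.mulSingle (0 : Fin 7) (Multiplicative.ofAdd (1 : ZMod 3)) := by
  have h : ∀ j : Fin 7, Multiplicative.ofAdd (om (q0 (reps j.castSucc)) - om (reps j.castSucc))
      = (Pi.mulSingle (0 : Fin 7) (Multiplicative.ofAdd (1 : ZMod 3)) : Fin 7 → Multiplicative (ZMod 3)) j := by
    decide
  funext j
  have h2 : tw w0 j.castSucc = om (q0 (reps j.castSucc)) - om (reps j.castSucc) := by
    unfold tw
    rw [w0_perm]
  calc chi ⟨w0, w0_mem⟩ j = Multiplicative.ofAdd (tw w0 j.castSucc) := rfl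
    _ = _ := by rw [h2]; exact h j

def q1x0 : Perm (Fin 25) := Equiv.mk ![0, 18, 17, 13, 9, 1, 4, 21, 19, 6, 3, 11, 7, 10, 2, 15, 16, 14, 5, 24, 20, 12, 22, 23, 8] ![0, 5, 14, 10, 6, 18, 9, 12, 24, 4, 13, 11, 21, 3, 17, 15, 16, 2, 1, 8, 20, 7, 22, 23, 19] (by decide) (by decide)
lemma q1x0_eq : Ug * Lg⁻¹ * Ug * Lg⁻¹ * Ug * Lg⁻¹ * Ug * Lg⁻¹ * Ug * Lg⁻¹ * Ug * Lg⁻¹ = q1x0 := Equiv.ext (by decide)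
def q1x1 : Perm (Fin 25) := Equiv.mk ![0, 14, 10, 11, 4, 2, 6, 18, 8, 9, 22, 7, 1, 16, 13, 15, 12, 3, 17, 19, 20, 5, 21, 23, 24] ![0, 12, 5, 17, 4, 21, 6, 11, 8, 9, 2, 3, 16, 14, 1, 15, 13, 18, 7, 19, 20, 22, 10, 23, 24] (by decide) (by decide)
lemma q1x1_eq : Ug * Fg * Ug * Fg * Ug * Fg * Ug * Fg * Ug * Fg * Ug * Fg = q1x1 := Equiv.ext (by decide)
def q1x2 : Perm (Fin 25) := Equiv.mk ![0, 14, 12, 5, 3, 2, 10, 6, 8, 13, 1, 11, 4, 18, 7, 15, 16, 21, 17, 19, 20, 9, 22, 23, 24] ![0, 10, 5, 4, 12, 3, 7, 14, 8, 21, 6, 11, 2, 9, 1, 15, 16, 18, 13, 19, 20, 17, 22, 23, 24] (by decide) (by decide)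
lemma q1x2_eq : Ug * Fg * Ug * Fg * Ug * Fg * Ug * Fg * Ug * Fg⁻¹ * Ug * Fg⁻¹ = q1x2 := Equiv.ext (by decide)
def q1x3 : Perm (Fin 25) := Equiv.mk ![0, 7, 17, 23, 10, 12, 13, 11, 8, 3, 20, 18, 16, 15, 2, 6, 1, 14, 21, 19, 4, 22, 5, 9, 24] ![0, 16, 14, 9, 20, 22, 15, 1, 8, 23, 4, 7, 5, 6, 17, 13, 12, 2, 11, 19, 10, 18, 21, 3, 24] (by decide) (by decide)
lemma q1x3_eq : Ug * Fg⁻¹ * Ug * Fg⁻¹ * Ug * Fg⁻¹ * Ug * Fg⁻¹ * Ug * Rg⁻¹ * Ug * Rg⁻¹ = q1x3 := Equiv.ext (by decide)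
def q1x4 : Perm (Fin 25) := Equiv.mk ![0, 11, 9, 19, 23, 16, 20, 21, 5, 15, 24, 17, 7, 8, 4, 3, 14, 6, 22, 1, 13, 12, 2, 10, 18] ![0, 19, 22, 15, 14, 8, 17, 12, 13, 2, 23, 1, 21, 20, 16, 9, 5, 11, 24, 3, 6, 7, 18, 4, 10] (by decide) (by decide)
lemma q1x4_eq : Ug * Rg⁻¹ * Ug * Rg⁻¹ * Ug * Rg⁻¹ * Ug * Rg⁻¹ * Lg * Fg * Lg * Fg = q1x4 := Equiv.ext (by decide)
def q1x5 : Perm (Fin 25) := Equiv.mk ![0, 4, 2, 11, 3, 9, 10, 7, 1, 13, 22, 8, 12, 16, 14, 15, 24, 17, 6, 18, 20, 21, 19, 23, 5] ![0, 8, 2, 4, 1, 24, 18, 7, 11, 5, 6, 3, 12, 9, 14, 15, 13, 17, 19, 22, 20, 21, 10, 23, 16] (by decide) (by decide)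
lemma q1x5_eq : Lg * Fg * Lg * Fg * Lg * Fg * Lg * Fg * Lg * Fg * Lg * Fg = q1x5 := Equiv.ext (by decide)
def q1x6 : Perm (Fin 25) := Equiv.mk ![0, 10, 2, 19, 22, 3, 16, 21, 6, 11, 24, 18, 7, 8, 14, 15, 1, 17, 13, 9, 20, 12, 5, 23, 4] ![0, 16, 2, 5, 24, 22, 8, 12, 13, 19, 1, 9, 21, 18, 14, 15, 6, 17, 11, 3, 20, 7, 4, 23, 10] (by decide) (by decide)
lemma q1x6_eq : Lg * Fg * Lg * Fg = q1x6 := Equiv.ext (by decide)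
def w1 : G := (gU * gL⁻¹ * gU * gL⁻¹ * gU * gL⁻¹ * gU * gL⁻¹ * gU * gL⁻¹ * gU * gL⁻¹) * (gU * gF * gU * gF * gU * gF * gU * gF * gU * gF * gU * gF) * (gU * gF * gU * gF * gU * gF * gU * gF * gU * gF⁻¹ * gU * gF⁻¹) * (gU * gF⁻¹ * gU * gF⁻¹ * gU * gF⁻¹ * gU * gF⁻¹ * gU * gR⁻¹ * gU * gR⁻¹) * (gU * gR⁻¹ * gU * gR⁻¹ * gU * gR⁻¹ * gU * gR⁻¹ * gL * gF * gL * gF) * (gL * gF * gL * gF * gL * gF * gL * gF * gL * gF * gL * gF) * (gL * gF * gL * gF)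
def q1 : Perm (Fin 25) := q1x0 * q1x1 * q1x2 * q1x3 * q1x4 * q1x5 * q1x6
lemma w1_perm : ((w1 : G) : Perm (Fin 25)) = q1 := by
  simp only [w1, Subgroup.coe_mul, InvMemClass.coe_inv, gU_coe, gL_coe, gF_coe, gR_coe, gB_coe, gD_coe]
  rw [q1x0_eq, q1x1_eq, q1x2_eq, q1x3_eq, q1x4_eq, q1x5_eq, q1x6_eq]
  rfl

lemma w1_mem : w1 ∈ N := by
  rw [mem_N_iff]
  simp only [w1, map_mul, map_inv, phi_U, phi_L, phi_F, phi_R, phi_B, phi_D]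
  decide

lemma chi_w1 : chi ⟨w1, w1_mem⟩ = Pi.mulSingle (1 : Fin 7) (Multiplicative.ofAdd (1 : ZMod 3)) := by
  have h : ∀ j : Fin 7, Multiplicative.ofAdd (om (q1 (reps j.castSucc)) - om (reps j.castSucc))
      = (Pi.mulSingle (1 : Fin 7) (Multiplicative.ofAdd (1 : ZMod 3)) : Fin 7 → Multiplicative (ZMod 3)) j := by
    decide
  funext j
  have h2 : tw w1 j.castSucc = om (q1 (reps j.castSucc)) - om (reps j.castSucc) := by
    unfold tw
    rw [w1_perm]
  calc chi ⟨w1, w1_mem⟩ j = Multiplicative.ofAdd (tw w1 j.castSucc) := rfl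
    _ = _ := by rw [h2]; exact h j

def q2x0 : Perm (Fin 25) := Equiv.mk ![0, 1, 10, 6, 7, 5, 21, 19, 2, 12, 9, 11, 8, 4, 13, 15, 16, 3, 18, 14, 20, 24, 22, 23, 17] ![0, 1, 8, 17, 13, 5, 3, 4, 12, 10, 2, 11, 9, 14, 19, 15, 16, 24, 18, 7, 20, 6, 22, 23, 21] (by decide) (by decide)
lemma q2x0_eq : Ug * Lg * Ug * Lg * Ug * Lg * Ug * Lg * Ug * Lg * Ug * Lg = q2x0 := Equiv.ext (by decide)
def q2x1 : Perm (Fin 25) := Equiv.mk ![0, 4, 10, 8, 17, 9, 2, 7, 1, 14, 19, 11, 12, 24, 13, 15, 16, 3, 6, 18, 20, 21, 22, 23, 5] ![0, 8, 6, 17, 1, 24, 18, 7, 3, 5, 2, 11, 12, 14, 9, 15, 16, 4, 19, 10, 20, 21, 22, 23, 13] (by decide) (by decide)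
lemma q2x1_eq : Ug * Lg * Ug * Lg * Ug * Lg * Ug * Lg * Ug * Lg⁻¹ * Ug * Lg⁻¹ = q2x1 := Equiv.ext (by decide)
def q2x2 : Perm (Fin 25) := Equiv.mk ![0, 24, 10, 6, 17, 19, 2, 5, 7, 14, 9, 22, 18, 4, 13, 15, 11, 3, 8, 21, 20, 1, 16, 23, 12] ![0, 21, 6, 17, 13, 7, 3, 8, 18, 10, 2, 16, 24, 14, 9, 15, 22, 4, 12, 5, 20, 19, 11, 23, 1] (by decide) (by decide)
lemma q2x2_eq : Ug * Lg⁻¹ * Ug * Fg * Ug * Fg * Ug * Fg * Ug * Fg * Ug * Fg = q2x2 := Equiv.ext (by decide)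
def q2x3 : Perm (Fin 25) := Equiv.mk ![0, 11, 4, 10, 20, 16, 15, 12, 8, 23, 13, 14, 21, 3, 6, 1, 2, 9, 22, 19, 5, 7, 17, 18, 24] ![0, 15, 16, 13, 2, 20, 14, 21, 8, 17, 3, 1, 7, 10, 11, 6, 5, 22, 23, 19, 4, 12, 18, 9, 24] (by decide) (by decide)
lemma q2x3_eq : Ug * Fg⁻¹ * Ug * Fg⁻¹ * Ug * Fg⁻¹ * Ug * Rg * Ug * Rg * Ug * Rg = q2x3 := Equiv.ext (by decide)
def q2x4 : Perm (Fin 25) := Equiv.mk ![0, 24, 22, 17, 23, 19, 20, 12, 5, 15, 2, 3, 21, 14, 16, 9, 13, 11, 8, 1, 6, 7, 10, 4, 18] ![0, 19, 10, 11, 23, 8, 20, 21, 18, 15, 22, 17, 7, 16, 13, 9, 14, 3, 24, 5, 6, 12, 2, 4, 1] (by decide) (by decide)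
lemma q2x4_eq : Ug * Rg * Ug * Rg * Lg * Fg * Lg * Fg * Lg * Fg * Lg * Fg = q2x4 := Equiv.ext (by decide)
def q2x5 : Perm (Fin 25) := Equiv.mk ![0, 4, 2, 11, 3, 9, 10, 7, 1, 13, 22, 8, 12, 16, 14, 15, 24, 17, 6, 18, 20, 21, 19, 23, 5] ![0, 8, 2, 4, 1, 24, 18, 7, 11, 5, 6, 3, 12, 9, 14, 15, 13, 17, 19, 22, 20, 21, 10, 23, 16] (by decide) (by decide)
lemma q2x5_eq : Lg * Fg * Lg * Fg * Lg * Fg * Lg * Fg * Lg * Fg * Lg * Fg = q2x5 := Equiv.ext (by decide)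
def w2 : G := (gU * gL * gU * gL * gU * gL * gU * gL * gU * gL * gU * gL) * (gU * gL * gU * gL * gU * gL * gU * gL * gU * gL⁻¹ * gU * gL⁻¹) * (gU * gL⁻¹ * gU * gF * gU * gF * gU * gF * gU * gF * gU * gF) * (gU * gF⁻¹ * gU * gF⁻¹ * gU * gF⁻¹ * gU * gR * gU * gR * gU * gR) * (gU * gR * gU * gR * gL * gF * gL * gF * gL * gF * gL * gF) * (gL * gF * gL * gF * gL * gF * gL * gF * gL * gF * gL * gF)
def q2 : Perm (Fin 25) := q2x0 * q2x1 * q2x2 * q2x3 * q2x4 * q2x5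
lemma w2_perm : ((w2 : G) : Perm (Fin 25)) = q2 := by
  simp only [w2, Subgroup.coe_mul, InvMemClass.coe_inv, gU_coe, gL_coe, gF_coe, gR_coe, gB_coe, gD_coe]
  rw [q2x0_eq, q2x1_eq, q2x2_eq, q2x3_eq, q2x4_eq, q2x5_eq]
  rfl

lemma w2_mem : w2 ∈ N := by
  rw [mem_N_iff]
  simp only [w2, map_mul, map_inv, phi_U, phi_L, phi_F, phi_R, phi_B, phi_D]
  decide

lemma chi_w2 : chi ⟨w2, w2_mem⟩ = Pi.mulSingle (2 : Fin 7) (Multiplicative.ofAdd (1 : ZMod 3)) := by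
  have h : ∀ j : Fin 7, Multiplicative.ofAdd (om (q2 (reps j.castSucc)) - om (reps j.castSucc))
      = (Pi.mulSingle (2 : Fin 7) (Multiplicative.ofAdd (1 : ZMod 3)) : Fin 7 → Multiplicative (ZMod 3)) j := by
    decide
  funext j
  have h2 : tw w2 j.castSucc = om (q2 (reps j.castSucc)) - om (reps j.castSucc) := by
    unfold tw
    rw [w2_perm]
  calc chi ⟨w2, w2_mem⟩ j = Multiplicative.ofAdd (tw w2 j.castSucc) := rfl
    _ = _ := by rw [h2]; exact h j

def q3x0 : Perm (Fin 25) := Equiv.mk ![0, 1, 10, 6, 7, 5, 21, 19, 2, 12, 9, 11, 8, 4, 13, 15, 16, 3, 18, 14, 20, 24, 22, 23, 17] ![0, 1, 8, 17, 13, 5, 3, 4, 12, 10, 2, 11, 9, 14, 19, 15, 16, 24, 18, 7, 20, 6, 22, 23, 21] (by decide) (by decide)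
lemma q3x0_eq : Ug * Lg * Ug * Lg * Ug * Lg * Ug * Lg * Ug * Lg * Ug * Lg = q3x0 := Equiv.ext (by decide)
def q3x1 : Perm (Fin 25) := Equiv.mk ![0, 4, 10, 8, 17, 9, 2, 7, 1, 14, 19, 11, 12, 24, 13, 15, 16, 3, 6, 18, 20, 21, 22, 23, 5] ![0, 8, 6, 17, 1, 24, 18, 7, 3, 5, 2, 11, 12, 14, 9, 15, 16, 4, 19, 10, 20, 21, 22, 23, 13] (by decide) (by decide)
lemma q3x1_eq : Ug * Lg * Ug * Lg * Ug * Lg * Ug * Lg * Ug * Lg⁻¹ * Ug * Lg⁻¹ = q3x1 := Equiv.ext (by decide)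
def q3x2 : Perm (Fin 25) := Equiv.mk ![0, 24, 10, 6, 17, 19, 2, 18, 7, 14, 9, 22, 1, 4, 13, 23, 11, 3, 8, 21, 15, 5, 16, 20, 12] ![0, 12, 6, 17, 13, 21, 3, 8, 18, 10, 2, 16, 24, 14, 9, 20, 22, 4, 7, 5, 23, 19, 11, 15, 1] (by decide) (by decide)
lemma q3x2_eq : Ug * Lg⁻¹ * Ug * Rg * Ug * Rg * Ug * Rg * Ug * Rg * Ug * Rg = q3x2 := Equiv.ext (by decide)
def q3x3 : Perm (Fin 25) := Equiv.mk ![0, 14, 9, 22, 18, 2, 5, 7, 8, 1, 16, 20, 12, 11, 4, 13, 23, 6, 17, 19, 10, 21, 15, 3, 24] ![0, 9, 5, 23, 14, 6, 17, 7, 8, 2, 20, 13, 12, 15, 1, 22, 10, 18, 4, 19, 11, 21, 3, 16, 24] (by decide) (by decide)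
lemma q3x3_eq : Ug * Rg * Ug * Rg * Ug * Rg * Ug * Rg * Ug * Rg * Ug * Rg⁻¹ = q3x3 := Equiv.ext (by decide)
def q3x4 : Perm (Fin 25) := Equiv.mk ![0, 24, 18, 17, 4, 19, 6, 12, 10, 9, 2, 15, 21, 14, 5, 22, 20, 1, 8, 13, 11, 7, 23, 16, 3] ![0, 17, 10, 24, 4, 14, 6, 21, 18, 9, 8, 20, 7, 19, 13, 11, 23, 3, 2, 5, 16, 12, 15, 22, 1] (by decide) (by decide)
lemma q3x4_eq : Ug * Rg⁻¹ * Ug * Rg⁻¹ * Lg * Fg * Lg * Fg * Lg * Fg * Lg * Fg = q3x4 := Equiv.ext (by decide)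
def q3x5 : Perm (Fin 25) := Equiv.mk ![0, 4, 2, 11, 3, 9, 10, 7, 1, 13, 22, 8, 12, 16, 14, 15, 24, 17, 6, 18, 20, 21, 19, 23, 5] ![0, 8, 2, 4, 1, 24, 18, 7, 11, 5, 6, 3, 12, 9, 14, 15, 13, 17, 19, 22, 20, 21, 10, 23, 16] (by decide) (by decide)
lemma q3x5_eq : Lg * Fg * Lg * Fg * Lg * Fg * Lg * Fg * Lg * Fg * Lg * Fg = q3x5 := Equiv.ext (by decide)
def w3 : G := (gU * gL * gU * gL * gU * gL * gU * gL * gU * gL * gU * gL) * (gU * gL * gU * gL * gU * gL * gU * gL * gU * gL⁻¹ * gU * gL⁻¹) * (gU * gL⁻¹ * gU * gR * gU * gR * gU * gR * gU * gR * gU * gR) * (gU * gR * gU * gR * gU * gR * gU * gR * gU * gR * gU * gR⁻¹) * (gU * gR⁻¹ * gU * gR⁻¹ * gL * gF * gL * gF * gL * gF * gL * gF) * (gL * gF * gL * gF * gL * gF * gL * gF * gL * gF * gL * gF)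
def q3 : Perm (Fin 25) := q3x0 * q3x1 * q3x2 * q3x3 * q3x4 * q3x5
lemma w3_perm : ((w3 : G) : Perm (Fin 25)) = q3 := by
  simp only [w3, Subgroup.coe_mul, InvMemClass.coe_inv, gU_coe, gL_coe, gF_coe, gR_coe, gB_coe, gD_coe]
  rw [q3x0_eq, q3x1_eq, q3x2_eq, q3x3_eq, q3x4_eq, q3x5_eq]
  rfl

lemma w3_mem : w3 ∈ N := by
  rw [mem_N_iff]
  simp only [w3, map_mul, map_inv, phi_U, phi_L, phi_F, phi_R, phi_B, phi_D]
  decide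

lemma chi_w3 : chi ⟨w3, w3_mem⟩ = Pi.mulSingle (3 : Fin 7) (Multiplicative.ofAdd (1 : ZMod 3)) := by
  have h : ∀ j : Fin 7, Multiplicative.ofAdd (om (q3 (reps j.castSucc)) - om (reps j.castSucc))
      = (Pi.mulSingle (3 : Fin 7) (Multiplicative.ofAdd (1 : ZMod 3)) : Fin 7 → Multiplicative (ZMod 3)) j := by
    decide
  funext j
  have h2 : tw w3 j.castSucc = om (q3 (reps j.castSucc)) - om (reps j.castSucc) := by
    unfold tw
    rw [w3_perm]
  calc chi ⟨w3, w3_mem⟩ j = Multiplicative.ofAdd (tw w3 j.castSucc) := rfl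
    _ = _ := by rw [h2]; exact h j

def q4x0 : Perm (Fin 25) := Equiv.mk ![0, 14, 10, 11, 4, 2, 6, 18, 8, 9, 22, 7, 1, 16, 13, 15, 12, 3, 17, 19, 20, 5, 21, 23, 24] ![0, 12, 5, 17, 4, 21, 6, 11, 8, 9, 2, 3, 16, 14, 1, 15, 13, 18, 7, 19, 20, 22, 10, 23, 24] (by decide) (by decide)
lemma q4x0_eq : Ug * Fg * Ug * Fg * Ug * Fg * Ug * Fg * Ug * Fg * Ug * Fg = q4x0 := Equiv.ext (by decide)
def q4x1 : Perm (Fin 25) := Equiv.mk ![0, 20, 3, 17, 18, 23, 5, 16, 8, 1, 2, 21, 22, 14, 10, 6, 7, 13, 15, 19, 4, 11, 12, 9, 24] ![0, 9, 10, 2, 20, 6, 15, 16, 8, 23, 14, 21, 22, 17, 13, 18, 7, 3, 4, 19, 1, 11, 12, 5, 24] (by decide) (by decide)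
lemma q4x1_eq : Ug * Fg * Ug * Fg * Ug * Fg * Ug * Fg * Ug * Rg * Ug * Rg = q4x1 := Equiv.ext (by decide)
def q4x2 : Perm (Fin 25) := Equiv.mk ![0, 22, 6, 3, 20, 11, 15, 7, 8, 23, 10, 2, 12, 13, 9, 5, 17, 4, 16, 19, 18, 21, 14, 1, 24] ![0, 23, 11, 3, 17, 15, 2, 7, 8, 14, 10, 5, 12, 13, 22, 6, 18, 16, 20, 19, 4, 21, 1, 9, 24] (by decide) (by decide)
lemma q4x2_eq : Ug * Rg * Ug * Rg * Ug * Rg = q4x2 := Equiv.ext (by decide)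
def w4 : G := (gU * gF * gU * gF * gU * gF * gU * gF * gU * gF * gU * gF) * (gU * gF * gU * gF * gU * gF * gU * gF * gU * gR * gU * gR) * (gU * gR * gU * gR * gU * gR)
def q4 : Perm (Fin 25) := q4x0 * q4x1 * q4x2
lemma w4_perm : ((w4 : G) : Perm (Fin 25)) = q4 := by
  simp only [w4, Subgroup.coe_mul, InvMemClass.coe_inv, gU_coe, gL_coe, gF_coe, gR_coe, gB_coe, gD_coe]
  rw [q4x0_eq, q4x1_eq, q4x2_eq]
  rfl

lemma w4_mem : w4 ∈ N := by
  rw [mem_N_iff]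
  simp only [w4, map_mul, map_inv, phi_U, phi_L, phi_F, phi_R, phi_B, phi_D]
  decide

lemma chi_w4 : chi ⟨w4, w4_mem⟩ = Pi.mulSingle (4 : Fin 7) (Multiplicative.ofAdd (1 : ZMod 3)) := by
  have h : ∀ j : Fin 7, Multiplicative.ofAdd (om (q4 (reps j.castSucc)) - om (reps j.castSucc))
      = (Pi.mulSingle (4 : Fin 7) (Multiplicative.ofAdd (1 : ZMod 3)) : Fin 7 → Multiplicative (ZMod 3)) j := by
    decide
  funext j
  have h2 : tw w4 j.castSucc = om (q4 (reps j.castSucc)) - om (reps j.castSucc) := by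
    unfold tw
    rw [w4_perm]
  calc chi ⟨w4, w4_mem⟩ j = Multiplicative.ofAdd (tw w4 j.castSucc) := rfl
    _ = _ := by rw [h2]; exact h j

def q5x0 : Perm (Fin 25) := Equiv.mk ![0, 18, 17, 13, 9, 1, 4, 21, 19, 6, 3, 11, 7, 10, 2, 15, 16, 14, 5, 24, 20, 12, 22, 23, 8] ![0, 5, 14, 10, 6, 18, 9, 12, 24, 4, 13, 11, 21, 3, 17, 15, 16, 2, 1, 8, 20, 7, 22, 23, 19] (by decide) (by decide)
lemma q5x0_eq : Ug * Lg⁻¹ * Ug * Lg⁻¹ * Ug * Lg⁻¹ * Ug * Lg⁻¹ * Ug * Lg⁻¹ * Ug * Lg⁻¹ = q5x0 := Equiv.ext (by decide)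
def q5x1 : Perm (Fin 25) := Equiv.mk ![0, 5, 17, 13, 6, 18, 9, 21, 8, 4, 3, 22, 7, 10, 2, 15, 11, 14, 1, 19, 20, 12, 16, 23, 24] ![0, 18, 14, 10, 9, 1, 4, 12, 8, 6, 13, 16, 21, 3, 17, 15, 22, 2, 5, 19, 20, 7, 11, 23, 24] (by decide) (by decide)
lemma q5x1_eq : Ug * Fg⁻¹ * Ug * Fg⁻¹ * Ug * Fg⁻¹ * Ug * Fg⁻¹ * Ug * Fg⁻¹ * Ug * Fg⁻¹ = q5x1 := Equiv.ext (by decide)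
def q5x2 : Perm (Fin 25) := Equiv.mk ![0, 5, 17, 10, 9, 18, 4, 7, 8, 6, 13, 22, 12, 3, 2, 23, 11, 14, 1, 19, 15, 21, 16, 20, 24] ![0, 18, 14, 13, 6, 1, 9, 7, 8, 4, 3, 16, 12, 10, 17, 20, 22, 2, 5, 19, 23, 21, 11, 15, 24] (by decide) (by decide)
lemma q5x2_eq : Ug * Rg⁻¹ * Ug * Rg⁻¹ * Ug * Rg⁻¹ * Ug * Rg⁻¹ * Ug * Rg⁻¹ * Ug * Rg⁻¹ = q5x2 := Equiv.ext (by decide)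
def q5x3 : Perm (Fin 25) := Equiv.mk ![0, 18, 2, 10, 6, 1, 9, 21, 19, 4, 13, 22, 7, 3, 14, 15, 11, 17, 5, 24, 20, 12, 16, 23, 8] ![0, 5, 2, 13, 9, 18, 4, 12, 24, 6, 3, 16, 21, 10, 14, 15, 22, 17, 1, 8, 20, 7, 11, 23, 19] (by decide) (by decide)
lemma q5x3_eq : Lg * Fg * Lg * Fg * Lg * Fg * Lg * Fg * Lg * Fg = q5x3 := Equiv.ext (by decide)
def w5 : G := (gU * gL⁻¹ * gU * gL⁻¹ * gU * gL⁻¹ * gU * gL⁻¹ * gU * gL⁻¹ * gU * gL⁻¹) * (gU * gF⁻¹ * gU * gF⁻¹ * gU * gF⁻¹ * gU * gF⁻¹ * gU * gF⁻¹ * gU * gF⁻¹) * (gU * gR⁻¹ * gU * gR⁻¹ * gU * gR⁻¹ * gU * gR⁻¹ * gU * gR⁻¹ * gU * gR⁻¹) * (gL * gF * gL * gF * gL * gF * gL * gF * gL * gF)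
def q5 : Perm (Fin 25) := q5x0 * q5x1 * q5x2 * q5x3
lemma w5_perm : ((w5 : G) : Perm (Fin 25)) = q5 := by
  simp only [w5, Subgroup.coe_mul, InvMemClass.coe_inv, gU_coe, gL_coe, gF_coe, gR_coe, gB_coe, gD_coe]
  rw [q5x0_eq, q5x1_eq, q5x2_eq, q5x3_eq]
  rfl

lemma w5_mem : w5 ∈ N := by
  rw [mem_N_iff]
  simp only [w5, map_mul, map_inv, phi_U, phi_L, phi_F, phi_R, phi_B, phi_D]
  decide

lemma chi_w5 : chi ⟨w5, w5_mem⟩ = Pi.mulSingle (5 : Fin 7) (Multiplicative.ofAdd (1 : ZMod 3)) := by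
  have h : ∀ j : Fin 7, Multiplicative.ofAdd (om (q5 (reps j.castSucc)) - om (reps j.castSucc))
      = (Pi.mulSingle (5 : Fin 7) (Multiplicative.ofAdd (1 : ZMod 3)) : Fin 7 → Multiplicative (ZMod 3)) j := by
    decide
  funext j
  have h2 : tw w5 j.castSucc = om (q5 (reps j.castSucc)) - om (reps j.castSucc) := by
    unfold tw
    rw [w5_perm]
  calc chi ⟨w5, w5_mem⟩ j = Multiplicative.ofAdd (tw w5 j.castSucc) := rfl
    _ = _ := by rw [h2]; exact h j

def q6x0 : Perm (Fin 25) := Equiv.mk ![0, 24, 10, 6, 17, 19, 2, 5, 21, 14, 9, 11, 18, 4, 13, 15, 16, 3, 8, 12, 20, 1, 22, 23, 7] ![0, 21, 6, 17, 13, 7, 3, 24, 18, 10, 2, 11, 19, 14, 9, 15, 16, 4, 12, 5, 20, 8, 22, 23, 1] (by decide) (by decide)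
lemma q6x0_eq : Ug * Lg * Ug * Lg * Ug * Lg * Ug * Lg * Ug * Lg * Ug * Lg⁻¹ = q6x0 := Equiv.ext (by decide)
def q6x1 : Perm (Fin 25) := Equiv.mk ![0, 6, 17, 16, 10, 4, 13, 7, 1, 3, 11, 8, 12, 22, 2, 15, 24, 14, 9, 18, 20, 21, 19, 23, 5] ![0, 8, 14, 9, 5, 24, 1, 7, 11, 18, 4, 10, 12, 6, 17, 15, 3, 2, 19, 22, 20, 21, 13, 23, 16] (by decide) (by decide)
lemma q6x1_eq : Ug * Lg⁻¹ * Ug * Lg⁻¹ * Ug * Lg⁻¹ * Ug * Lg⁻¹ * Ug * Lg⁻¹ * Ug * Fg = q6x1 := Equiv.ext (by decide)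
def q6x2 : Perm (Fin 25) := Equiv.mk ![0, 14, 10, 11, 4, 2, 6, 18, 8, 9, 22, 7, 1, 16, 13, 15, 12, 3, 17, 19, 20, 5, 21, 23, 24] ![0, 12, 5, 17, 4, 21, 6, 11, 8, 9, 2, 3, 16, 14, 1, 15, 13, 18, 7, 19, 20, 22, 10, 23, 24] (by decide) (by decide)
lemma q6x2_eq : Ug * Fg * Ug * Fg * Ug * Fg * Ug * Fg * Ug * Fg * Ug * Fg = q6x2 := Equiv.ext (by decide)
def q6x3 : Perm (Fin 25) := Equiv.mk ![0, 11, 12, 5, 9, 16, 4, 13, 8, 6, 1, 14, 10, 18, 7, 15, 2, 21, 22, 19, 20, 3, 17, 23, 24] ![0, 10, 16, 21, 6, 3, 9, 14, 8, 4, 12, 1, 2, 7, 11, 15, 5, 22, 13, 19, 20, 17, 18, 23, 24] (by decide) (by decide)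
lemma q6x3_eq : Ug * Fg * Ug * Fg * Ug * Fg * Ug * Fg⁻¹ * Ug * Fg⁻¹ * Ug * Fg⁻¹ = q6x3 := Equiv.ext (by decide)
def q6x4 : Perm (Fin 25) := Equiv.mk ![0, 5, 17, 3, 4, 18, 6, 12, 8, 9, 10, 22, 21, 13, 2, 20, 11, 14, 1, 19, 23, 7, 16, 15, 24] ![0, 18, 14, 3, 4, 1, 6, 21, 8, 9, 10, 16, 7, 13, 17, 23, 22, 2, 5, 19, 15, 12, 11, 20, 24] (by decide) (by decide)
lemma q6x4_eq : Ug * Fg⁻¹ * Ug * Fg⁻¹ * Ug * Fg⁻¹ * Ug * Rg⁻¹ * Ug * Rg⁻¹ * Ug * Rg⁻¹ = q6x4 := Equiv.ext (by decide)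
def q6x5 : Perm (Fin 25) := Equiv.mk ![0, 16, 14, 18, 8, 22, 19, 7, 13, 24, 5, 6, 12, 1, 17, 20, 4, 2, 11, 3, 23, 21, 9, 15, 10] ![0, 13, 17, 19, 16, 10, 11, 7, 4, 22, 24, 18, 12, 8, 2, 23, 1, 14, 3, 6, 15, 21, 5, 20, 9] (by decide) (by decide)
lemma q6x5_eq : Ug * Rg⁻¹ * Ug * Rg⁻¹ * Ug * Rg⁻¹ * Lg * Fg * Lg * Fg * Lg * Fg = q6x5 := Equiv.ext (by decide)
def q6x6 : Perm (Fin 25) := Equiv.mk ![0, 10, 2, 19, 22, 3, 16, 21, 6, 11, 24, 18, 7, 8, 14, 15, 1, 17, 13, 9, 20, 12, 5, 23, 4] ![0, 16, 2, 5, 24, 22, 8, 12, 13, 19, 1, 9, 21, 18, 14, 15, 6, 17, 11, 3, 20, 7, 4, 23, 10] (by decide) (by decide)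
lemma q6x6_eq : Lg * Fg * Lg * Fg = q6x6 := Equiv.ext (by decide)
def w6 : G := (gU * gL * gU * gL * gU * gL * gU * gL * gU * gL * gU * gL⁻¹) * (gU * gL⁻¹ * gU * gL⁻¹ * gU * gL⁻¹ * gU * gL⁻¹ * gU * gL⁻¹ * gU * gF) * (gU * gF * gU * gF * gU * gF * gU * gF * gU * gF * gU * gF) * (gU * gF * gU * gF * gU * gF * gU * gF⁻¹ * gU * gF⁻¹ * gU * gF⁻¹) * (gU * gF⁻¹ * gU * gF⁻¹ * gU * gF⁻¹ * gU * gR⁻¹ * gU * gR⁻¹ * gU * gR⁻¹) * (gU * gR⁻¹ * gU * gR⁻¹ * gU * gR⁻¹ * gL * gF * gL * gF * gL * gF) * (gL * gF * gL * gF)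
def q6 : Perm (Fin 25) := q6x0 * q6x1 * q6x2 * q6x3 * q6x4 * q6x5 * q6x6
lemma w6_perm : ((w6 : G) : Perm (Fin 25)) = q6 := by
  simp only [w6, Subgroup.coe_mul, InvMemClass.coe_inv, gU_coe, gL_coe, gF_coe, gR_coe, gB_coe, gD_coe]
  rw [q6x0_eq, q6x1_eq, q6x2_eq, q6x3_eq, q6x4_eq, q6x5_eq, q6x6_eq]
  rfl

lemma w6_mem : w6 ∈ N := by
  rw [mem_N_iff]
  simp only [w6, map_mul, map_inv, phi_U, phi_L, phi_F, phi_R, phi_B, phi_D]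
  decide

lemma chi_w6 : chi ⟨w6, w6_mem⟩ = Pi.mulSingle (6 : Fin 7) (Multiplicative.ofAdd (1 : ZMod 3)) := by
  have h : ∀ j : Fin 7, Multiplicative.ofAdd (om (q6 (reps j.castSucc)) - om (reps j.castSucc))
      = (Pi.mulSingle (6 : Fin 7) (Multiplicative.ofAdd (1 : ZMod 3)) : Fin 7 → Multiplicative (ZMod 3)) j := by
    decide
  funext j
  have h2 : tw w6 j.castSucc = om (q6 (reps j.castSucc)) - om (reps j.castSucc) := by
    unfold tw
    rw [w6_perm]
  calc chi ⟨w6, w6_mem⟩ j = Multiplicative.ofAdd (tw w6 j.castSucc) := rfl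
    _ = _ := by rw [h2]; exact h j

lemma pow_ofAdd (n : ℕ) :
    (Multiplicative.ofAdd (1 : ZMod 3)) ^ n = Multiplicative.ofAdd ((n : ZMod 3)) := by
  rw [← ofAdd_nsmul, nsmul_eq_mul, mul_one]

lemma chi_surj : Function.Surjective chi := by
  intro v
  have hv : ∀ i : Fin 7, Multiplicative.ofAdd (((Multiplicative.toAdd (v i)).val : ZMod 3)) = v i :=
    fun i => congrArg Multiplicative.ofAdd (ZMod.natCast_rightInverse (Multiplicative.toAdd (v i)))
  set a : Fin 7 → ℕ := fun i => (Multiplicative.toAdd (v i)).val with ha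
  refine ⟨(⟨w0, w0_mem⟩ : N) ^ (a 0) * ⟨w1, w1_mem⟩ ^ (a 1) * ⟨w2, w2_mem⟩ ^ (a 2) *
    ⟨w3, w3_mem⟩ ^ (a 3) * ⟨w4, w4_mem⟩ ^ (a 4) * ⟨w5, w5_mem⟩ ^ (a 5) * ⟨w6, w6_mem⟩ ^ (a 6), ?_⟩
  simp only [map_mul, map_pow, chi_w0, chi_w1, chi_w2, chi_w3, chi_w4, chi_w5, chi_w6]
  funext j
  fin_cases j <;>
    simp [Pi.mulSingle_apply, pow_ofAdd, Pi.mul_apply, Pi.pow_apply] <;>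
    exact hv _

noncomputable def iso : N ≃* (Fin 7 → Multiplicative (ZMod 3)) :=
  MulEquiv.ofBijective chi ⟨chi_inj, chi_surj⟩

lemma card_N : Nat.card N = 2187 := by
  rw [Nat.card_congr iso.toEquiv, Nat.card_pi]
  simp [Nat.card_eq_fintype_card]

end PC

open Equiv

/-- The Pocket Cube group has a normal subgroup N of order 2187 isomorphic to C₃⁷, with
quotient isomorphic to S₈ (expressed via a surjective homomorphism onto S₈ with
kernel N). -/
theorem pocket_cube_normal_structure :
    ∃ N : Subgroup (Subgroup.closure
      ({ c[(1 : Fin 25), 2, 3, 4] * c[(5 : Fin 25), 17, 13, 9] * c[(6 : Fin 25), 18, 14, 10],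
         c[(1 : Fin 25), 9, 21, 19] * c[(4 : Fin 25), 12, 24, 18] * c[(5 : Fin 25), 6, 7, 8],
         c[(9 : Fin 25), 10, 11, 12] * c[(4 : Fin 25), 13, 22, 7] * c[(3 : Fin 25), 16, 21, 6],
         c[(13 : Fin 25), 14, 15, 16] * c[(2 : Fin 25), 20, 22, 10] * c[(3 : Fin 25), 17, 23, 11],
         c[(17 : Fin 25), 18, 19, 20] * c[(1 : Fin 25), 8, 23, 14] * c[(2 : Fin 25), 5, 24, 15],
         c[(21 : Fin 25), 22, 23, 24] * c[(12 : Fin 25), 16, 20, 8] * c[(11 : Fin 25), 15, 19, 7] }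
        : Set (Equiv.Perm (Fin 25)))),
      N.Normal ∧
      Nat.card N = 2187 ∧
      Nonempty (N ≃* (Fin 7 → Multiplicative (ZMod 3))) ∧
      ∃ φ, Function.Surjective ⇑(φ : _ →* Equiv.Perm (Fin 8)) ∧ φ.ker = N := by
  exact ⟨PC.N, PC.phi.normal_ker, PC.card_N, ⟨PC.iso⟩, PC.phi, PC.phi_surj, rfl⟩
end
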